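/- arXiv:1510.04043 — 4 statements merged into one kernel-verified Lean document; each statement's English description precedes it below -/
import Mathlib

section
/- (Submodularity inequality) Let X, Y, Z be three independent ℝ^d-valued random variables such that the distributions of Y, X+Y, Y+Z and X+Y+Z are absolutely continuous with respect to Lebesgue measure and have finite differential entropy. Then H(X+Y+Z) + H(Y) ≤ H(X+Y) + H(Y+Z). -/
open MeasureTheory ProbabilityTheory

/-- Convolution of two measures on an additive monoid: the law of the sum of two independent
random variables with these laws. -/
noncomputable def mconv {E : Type*} [MeasurableSpace E] [Add E] (μ ν : Measure E) : Measure E :=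
  (μ.prod ν).map (fun p => p.1 + p.2)

/-- The differential entropy (base 2) `H(μ) = -∫ f log₂ f` of a measure `μ` with density `f`
with respect to Lebesgue measure (junk value if `μ` is not absolutely continuous or the
integrand is not integrable). -/
noncomputable def diffEnt {E : Type*} [MeasureSpace E] (μ : Measure E) : ℝ :=
  -∫ x, ((μ.rnDeriv volume x).toReal) * Real.logb 2 ((μ.rnDeriv volume x).toReal) ∂(volume : Measure E)

/-- `μ` is absolutely continuous with finite (i.e. well-defined) differential entropy. -/
def HasDiffEnt {E : Type*} [MeasureSpace E] (μ : Measure E) : Prop :=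
  μ ≪ (volume : Measure E) ∧
    Integrable (fun x => ((μ.rnDeriv volume x).toReal) * Real.logb 2 ((μ.rnDeriv volume x).toReal))
      (volume : Measure E)

/-- The standard Gaussian measure on `ℝ^d`. -/
noncomputable def stdGauss (d : ℕ) : Measure (Fin d → ℝ) :=
  Measure.pi (fun _ : Fin d => gaussianReal 0 1)

/-- The centered Gaussian measure on `ℝ^d` with covariance matrix `B·Bᵀ`, i.e. the law
of `G_B = B·G` for `G` standard Gaussian. -/
noncomputable def gaussMat {d : ℕ} (B : Matrix (Fin d) (Fin d) ℝ) : Measure (Fin d → ℝ) :=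
  (stdGauss d).map (fun x => B.mulVec x)

/-- `H(X; B) = H(X + G_B) - H(G_B)` where `G_B` is an independent centered Gaussian vector
with covariance `B·Bᵀ`, expressed via the law `μ` of `X`. -/
noncomputable def entAt {d : ℕ} (μ : Measure (Fin d → ℝ)) (B : Matrix (Fin d) (Fin d) ℝ) : ℝ :=
  diffEnt (mconv μ (gaussMat B)) - diffEnt (gaussMat B)

/-- `H(X; B₁ | B₂) = H(X; B₁) - H(X; B₂)`, expressed via the law `μ` of `X`. -/
noncomputable def entBetween {d : ℕ} (μ : Measure (Fin d → ℝ))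
    (B₁ B₂ : Matrix (Fin d) (Fin d) ℝ) : ℝ :=
  entAt μ B₁ - entAt μ B₂

/-! Write `p, q, r, s` for the densities of `Y, X+Y, Y+Z, X+Y+Z`. Up to the factor `1 / log 2`,
`H(X+Y) + H(Y+Z) - H(X+Y+Z) - H(Y)` is the expectation of `-log B` with
`B = q(X+Y) r(Y+Z) / (p(Y) s(X+Y+Z))`, and `-log B ≥ 1 - B`, so it suffices that `E[B] ≤ 1`.
Integrating out `Y` first cancels `p`; after the substitution `u = X+Y`, integrating out `X` turns
`r(u+Z-X)` into `s(u+Z)`, because `s` is the convolution of the law of `X` with `r`, and what is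
left is `∫ q = 1`. -/

open scoped ENNReal

theorem ENNReal.mul_div_mul_left_le (a b c : ℝ≥0∞) : c * (a / (c * b)) ≤ a / b := by
  rcases eq_or_ne c 0 with rfl | hc0
  · simp
  rcases eq_or_ne c ∞ with rfl | hctop
  · rcases eq_or_ne b 0 with rfl | hb0
    · rcases eq_or_ne a 0 with rfl | ha0 <;> simp [*, ENNReal.div_zero]
    · simp [hb0, ENNReal.top_mul]
  · rw [← mul_div_assoc, ENNReal.mul_div_mul_left _ _ hc0 hctop]

theorem ENNReal.log_toReal_mul_div_mul {a b c d : ℝ≥0∞} (ha : 0 < a.toReal) (hb : 0 < b.toReal)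
    (hc : 0 < c.toReal) (hd : 0 < d.toReal) :
    Real.log (a * b / (c * d)).toReal
      = Real.log a.toReal + Real.log b.toReal - Real.log c.toReal - Real.log d.toReal := by
  rw [ENNReal.toReal_div, ENNReal.toReal_mul, ENNReal.toReal_mul,
    Real.log_div (by positivity) (by positivity), Real.log_mul ha.ne' hb.ne',
    Real.log_mul hc.ne' hd.ne']
  ring

theorem integral_log_toReal_nonpos_of_lintegral_le_one {Ω : Type*} [MeasurableSpace Ω]
    {P : Measure Ω} [IsProbabilityMeasure P] {g : Ω → ℝ≥0∞} (hg : AEMeasurable g P)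
    (hle : ∫⁻ ω, g ω ∂P ≤ 1) (hpos : ∀ᵐ ω ∂P, 0 < (g ω).toReal)
    (hlog : Integrable (fun ω => Real.log (g ω).toReal) P) :
    ∫ ω, Real.log (g ω).toReal ∂P ≤ 0 := by
  have hfin : ∫⁻ ω, g ω ∂P ≠ ∞ := ne_top_of_le_ne_top ENNReal.one_ne_top hle
  have hint : Integrable (fun ω => (g ω).toReal) P := integrable_toReal_of_lintegral_ne_top hg hfin
  have hmean : ∫ ω, (g ω).toReal ∂P ≤ 1 := by
    rw [integral_toReal hg (ae_lt_top' hg hfin)]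
    exact ENNReal.toReal_le_of_le_ofReal zero_le_one (by simpa using hle)
  calc ∫ ω, Real.log (g ω).toReal ∂P ≤ ∫ ω, ((g ω).toReal - 1) ∂P :=
        integral_mono_ae hlog (hint.sub (integrable_const 1)) <| by
          filter_upwards [hpos] with ω hω using Real.log_le_sub_one_of_pos hω
    _ ≤ 0 := by
        rw [integral_sub hint (integrable_const 1), integral_const, probReal_univ, one_smul]
        linarith

theorem MeasureTheory.Measure.ae_toReal_rnDeriv_pos {α : Type*} [MeasurableSpace α]
    {μ ν : Measure α} [SigmaFinite μ] [μ.HaveLebesgueDecomposition ν] (hμν : μ ≪ ν) :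
    ∀ᵐ x ∂μ, 0 < (μ.rnDeriv ν x).toReal := by
  filter_upwards [Measure.rnDeriv_pos hμν, hμν.ae_le (Measure.rnDeriv_lt_top μ ν)]
    with x hpos hfin using ENNReal.toReal_pos hpos.ne' hfin.ne

section DifferentialEntropy

variable {E : Type*} [MeasureSpace E] [SigmaFinite (volume : Measure E)]

theorem diffEnt_eq_of_absolutelyContinuous {W : Measure E} [SigmaFinite W] (hW : W ≪ volume) :
    diffEnt W = -(∫ x, Real.log (W.rnDeriv volume x).toReal ∂W) / Real.log 2 := by
  simp only [diffEnt, Real.logb, ← mul_div_assoc, integral_div, integral_toReal_rnDeriv_mul hW,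
    neg_div]

theorem HasDiffEnt.integrable_log_rnDeriv {W : Measure E} [SigmaFinite W] (hW : HasDiffEnt W) :
    Integrable (fun x => Real.log (W.rnDeriv volume x).toReal) W := by
  refine (integrable_toReal_rnDeriv_mul_iff hW.1).mp <|
    (hW.2.mul_const (Real.log 2)).congr (ae_of_all _ fun x => ?_)
  simp only [Real.logb]
  field_simp

end DifferentialEntropy

section LawDensity

variable {E Ω : Type*} [MeasureSpace E] [MeasurableSpace Ω]

noncomputable def lawDensity (P : Measure Ω) (V : Ω → E) : E → ℝ≥0∞ :=
  (P.map V).rnDeriv volume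

@[fun_prop]
theorem measurable_lawDensity (P : Measure Ω) (V : Ω → E) : Measurable (lawDensity P V) :=
  Measure.measurable_rnDeriv _ _

variable [SigmaFinite (volume : Measure E)] {P : Measure Ω} [IsFiniteMeasure P] {V : Ω → E}

theorem withDensity_lawDensity (hac : P.map V ≪ volume) :
    volume.withDensity (lawDensity P V) = P.map V :=
  Measure.withDensity_rnDeriv_eq _ _ hac

theorem ae_toReal_lawDensity_pos (hV : AEMeasurable V P) (hac : P.map V ≪ volume) :
    ∀ᵐ ω ∂P, 0 < (lawDensity P V (V ω)).toReal :=
  ae_of_ae_map hV (Measure.ae_toReal_rnDeriv_pos hac)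

theorem HasDiffEnt.integrable_log_lawDensity (hV : AEMeasurable V P)
    (h : HasDiffEnt (P.map V)) :
    Integrable (fun ω => Real.log (lawDensity P V (V ω)).toReal) P :=
  (integrable_map_measure (measurable_lawDensity P V).ennreal_toReal.log.aestronglyMeasurable
    hV).mp h.integrable_log_rnDeriv

theorem diffEnt_map_eq_integral_log_lawDensity (hV : AEMeasurable V P)
    (hac : P.map V ≪ volume) :
    diffEnt (P.map V) = -(∫ ω, Real.log (lawDensity P V (V ω)).toReal ∂P) / Real.log 2 := by
  rw [diffEnt_eq_of_absolutelyContinuous hac,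
    ← integral_map hV (measurable_lawDensity P V).ennreal_toReal.log.aestronglyMeasurable]
  rfl

end LawDensity

section Independence

variable {Ω G : Type*} [MeasurableSpace Ω] {P : Measure Ω} [IsFiniteMeasure P]
  [MeasurableSpace G] {X Y Z : Ω → G}

theorem ProbabilityTheory.iIndepFun.map_prodMk_prodMk_eq_prod (hX : Measurable X)
    (hY : Measurable Y) (hZ : Measurable Z) (hindep : iIndepFun ![X, Y, Z] P) :
    P.map (fun ω => (Z ω, (X ω, Y ω))) = (P.map Z).prod ((P.map X).prod (P.map Y)) := by
  have hmeas : ∀ i, Measurable (![X, Y, Z] i) := fun i => by fin_cases i <;> assumption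
  have hZ_XY : IndepFun Z (fun ω => (X ω, Y ω)) P := by
    simpa using (hindep.indepFun_prodMk hmeas 0 1 2 (by decide) (by decide)).symm
  have hX_Y : IndepFun X Y P := by simpa using hindep.indepFun (show (0 : Fin 3) ≠ 1 by decide)
  rw [(indepFun_iff_map_prod_eq_prod_map_map hZ.aemeasurable
      (hX.prodMk hY).aemeasurable).mp hZ_XY,
    (indepFun_iff_map_prod_eq_prod_map_map hX.aemeasurable hY.aemeasurable).mp hX_Y]

theorem ProbabilityTheory.iIndepFun.map_add_add_eq_conv [AddMonoid G] [MeasurableAdd₂ G]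
    (hX : Measurable X) (hY : Measurable Y) (hZ : Measurable Z)
    (hindep : iIndepFun ![X, Y, Z] P) :
    P.map (fun ω => X ω + Y ω + Z ω) = P.map X ∗ P.map (fun ω => Y ω + Z ω) := by
  have hmeas : ∀ i, Measurable (![X, Y, Z] i) := fun i => by fin_cases i <;> assumption
  have hX_YZ : IndepFun X (fun ω => Y ω + Z ω) P := by
    simpa [Function.comp_def] using
      (hindep.indepFun_prodMk hmeas 1 2 0 (by decide) (by decide)).symm.comp
        measurable_id (measurable_add : Measurable fun p : G × G => p.1 + p.2)
  simp_rw [add_assoc]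
  exact hX_YZ.map_add_eq_map_conv_map hX (hY.add hZ)

end Independence

section Convolution

variable {G : Type*} [MeasureSpace G] [AddCommGroup G] [MeasurableAdd₂ G] [MeasurableNeg G]
  [SFinite (volume : Measure G)] [(volume : Measure G).IsAddLeftInvariant]

theorem MeasureTheory.Measure.conv_withDensity (μ : Measure G) [SFinite μ] {f : G → ℝ≥0∞}
    (hf : Measurable f) :
    μ ∗ volume.withDensity f = volume.withDensity (fun w => ∫⁻ x, f (w - x) ∂μ) := by
  refine Measure.ext_of_lintegral _ fun g hg => ?_
  have hconv : Measurable fun w => ∫⁻ x, f (w - x) ∂μ :=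
    (hf.comp measurable_sub).lintegral_prod_right'
  rw [Measure.lintegral_conv hg, lintegral_withDensity_eq_lintegral_mul _ hconv hg]
  calc ∫⁻ x, ∫⁻ y, g (x + y) ∂volume.withDensity f ∂μ
      = ∫⁻ x, ∫⁻ w, f (w - x) * g w ∂volume ∂μ := by
        refine lintegral_congr fun x => ?_
        rw [lintegral_withDensity_eq_lintegral_mul _ hf (by fun_prop),
          ← lintegral_add_left_eq_self (fun w => f (w - x) * g w) x]
        simp
    _ = ∫⁻ w, (∫⁻ x, f (w - x) ∂μ) * g w ∂volume := by
        rw [lintegral_lintegral_swap (by fun_prop)]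
        exact lintegral_congr fun w => lintegral_mul_const _ (by fun_prop)

theorem lintegral_density_ratio_le_one (μ ζ : Measure G) [SFinite μ]
    [IsProbabilityMeasure ζ] {p q r s : G → ℝ≥0∞} (hq : Measurable q) (hr : Measurable r)
    (hs : Measurable s) (hq_one : ∫⁻ u, q u = 1) (hs_conv : ∀ᵐ w, s w = ∫⁻ x, r (w - x) ∂μ) :
    ∫⁻ z, ∫⁻ x, ∫⁻ y, p y * (q (x + y) * r (y + z) / (p y * s (x + y + z))) ∂volume ∂μ ∂ζ
      ≤ 1 := by
  calc ∫⁻ z, ∫⁻ x, ∫⁻ y, p y * (q (x + y) * r (y + z) / (p y * s (x + y + z))) ∂volume ∂μ ∂ζ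
      ≤ ∫⁻ z, ∫⁻ x, ∫⁻ u, q u * r (u + z - x) / s (u + z) ∂volume ∂μ ∂ζ := by
        refine lintegral_mono fun z => lintegral_mono fun x => ?_
        rw [← lintegral_add_left_eq_self (fun u => q u * r (u + z - x) / s (u + z)) x]
        refine lintegral_mono fun y => ?_
        rw [show x + y + z - x = y + z by abel]
        exact ENNReal.mul_div_mul_left_le _ _ _
    _ = ∫⁻ z, ∫⁻ u, q u * ((∫⁻ x, r (u + z - x) ∂μ) / s (u + z)) ∂volume ∂ζ := by
        refine lintegral_congr fun z => ?_
        rw [lintegral_lintegral_swap (by fun_prop)]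
        refine lintegral_congr fun u => ?_
        simp_rw [div_eq_mul_inv, mul_assoc]
        rw [lintegral_const_mul _ (by fun_prop), lintegral_mul_const _ (by fun_prop)]
    _ ≤ ∫⁻ z, ∫⁻ u, q u ∂volume ∂ζ := by
        refine lintegral_mono fun z => ?_
        have hs_conv' : ∀ᵐ u, s (u + z) = ∫⁻ x, r (u + z - x) ∂μ :=
          (measurePreserving_add_right volume z).quasiMeasurePreserving.ae hs_conv
        refine lintegral_mono_ae ?_
        filter_upwards [hs_conv'] with u hu
        rw [← hu]
        exact mul_le_of_le_one_right' ENNReal.div_self_le_one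
    _ = 1 := by simp [hq_one]

end Convolution

section Submodularity

variable {G : Type*} [MeasureSpace G] [AddCommGroup G] [MeasurableAdd₂ G] [MeasurableNeg G]
  [SigmaFinite (volume : Measure G)] [(volume : Measure G).IsAddLeftInvariant]
  {Ω : Type*} [MeasurableSpace Ω] {P : Measure Ω} [IsProbabilityMeasure P] {X Y Z : Ω → G}

theorem MeasureTheory.Measure.rnDeriv_conv_withDensity (μ : Measure G) [SFinite μ] {f : G → ℝ≥0∞}
    (hf : Measurable f) :
    (μ ∗ volume.withDensity f).rnDeriv volume =ᵐ[volume] fun w => ∫⁻ x, f (w - x) ∂μ := by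
  rw [Measure.conv_withDensity μ hf]
  exact Measure.rnDeriv_withDensity _ (hf.comp measurable_sub).lintegral_prod_right'

theorem ProbabilityTheory.iIndepFun.lintegral_lawDensity_ratio_le_one (hX : Measurable X)
    (hY : Measurable Y) (hZ : Measurable Z) (hindep : iIndepFun ![X, Y, Z] P)
    (hY_ac : P.map Y ≪ volume)
    (hXY_ac : P.map (fun ω => X ω + Y ω) ≪ volume)
    (hYZ_ac : P.map (fun ω => Y ω + Z ω) ≪ volume) :
    ∫⁻ ω, lawDensity P (fun ω => X ω + Y ω) (X ω + Y ω)
        * lawDensity P (fun ω => Y ω + Z ω) (Y ω + Z ω)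
        / (lawDensity P Y (Y ω) * lawDensity P (fun ω => X ω + Y ω + Z ω) (X ω + Y ω + Z ω)) ∂P
      ≤ 1 := by
  set p := lawDensity P Y
  set q := lawDensity P (fun ω => X ω + Y ω)
  set r := lawDensity P (fun ω => Y ω + Z ω)
  set s := lawDensity P (fun ω => X ω + Y ω + Z ω)
  have hq_one : ∫⁻ u, q u = 1 :=
    (Measure.lintegral_rnDeriv hXY_ac).trans
      (Measure.isProbabilityMeasure_map (by fun_prop)).measure_univ
  have hp := measurable_lawDensity P Y
  have hq := measurable_lawDensity P (fun ω => X ω + Y ω)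
  have hr := measurable_lawDensity P (fun ω => Y ω + Z ω)
  have hs := measurable_lawDensity P (fun ω => X ω + Y ω + Z ω)
  have hs_conv : ∀ᵐ w, s w = ∫⁻ x, r (w - x) ∂P.map X := by
    have hS := hindep.map_add_add_eq_conv hX hY hZ
    rw [← withDensity_lawDensity hYZ_ac] at hS
    have h := Measure.rnDeriv_conv_withDensity (P.map X) hr
    rw [← hS] at h
    exact h
  have hF : Measurable fun t : G × G × G =>
      q (t.2.1 + t.2.2) * r (t.2.2 + t.1) / (p t.2.2 * s (t.2.1 + t.2.2 + t.1)) := by fun_prop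
  have := Measure.isProbabilityMeasure_map (μ := P) hZ.aemeasurable
  calc _ = ∫⁻ t, q (t.2.1 + t.2.2) * r (t.2.2 + t.1) / (p t.2.2 * s (t.2.1 + t.2.2 + t.1))
          ∂(P.map fun ω => (Z ω, (X ω, Y ω))) := (lintegral_map hF (by fun_prop)).symm
    _ = ∫⁻ z, ∫⁻ x, ∫⁻ y, p y * (q (x + y) * r (y + z) / (p y * s (x + y + z)))
          ∂volume ∂P.map X ∂P.map Z := by
        rw [hindep.map_prodMk_prodMk_eq_prod hX hY hZ, ← withDensity_lawDensity hY_ac,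
          lintegral_prod _ hF.aemeasurable]
        refine lintegral_congr fun z => ?_
        rw [lintegral_prod _ (by fun_prop)]
        exact lintegral_congr fun x => lintegral_withDensity_eq_lintegral_mul _ hp (by fun_prop)
    _ ≤ 1 := lintegral_density_ratio_le_one _ _ hq hr hs hq_one hs_conv

theorem ProbabilityTheory.iIndepFun.integral_log_lawDensity_le (hX : Measurable X)
    (hY : Measurable Y) (hZ : Measurable Z) (hindep : iIndepFun ![X, Y, Z] P)
    (h1 : HasDiffEnt (P.map Y)) (h2 : HasDiffEnt (P.map (fun ω => X ω + Y ω)))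
    (h3 : HasDiffEnt (P.map (fun ω => Y ω + Z ω)))
    (h4 : HasDiffEnt (P.map (fun ω => X ω + Y ω + Z ω))) :
    ∫ ω, Real.log (lawDensity P (fun ω => X ω + Y ω) (X ω + Y ω)).toReal ∂P
        + ∫ ω, Real.log (lawDensity P (fun ω => Y ω + Z ω) (Y ω + Z ω)).toReal ∂P
      ≤ ∫ ω, Real.log (lawDensity P Y (Y ω)).toReal ∂P
        + ∫ ω, Real.log (lawDensity P (fun ω => X ω + Y ω + Z ω) (X ω + Y ω + Z ω)).toReal ∂P := by
  set p := lawDensity P Y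
  set q := lawDensity P (fun ω => X ω + Y ω)
  set r := lawDensity P (fun ω => Y ω + Z ω)
  set s := lawDensity P (fun ω => X ω + Y ω + Z ω)
  have hXY : AEMeasurable (fun ω => X ω + Y ω) P := by fun_prop
  have hYZ : AEMeasurable (fun ω => Y ω + Z ω) P := by fun_prop
  have hXYZ : AEMeasurable (fun ω => X ω + Y ω + Z ω) P := by fun_prop
  have hpos : ∀ᵐ ω ∂P, 0 < (p (Y ω)).toReal ∧ 0 < (q (X ω + Y ω)).toReal ∧
      0 < (r (Y ω + Z ω)).toReal ∧ 0 < (s (X ω + Y ω + Z ω)).toReal := by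
    filter_upwards [ae_toReal_lawDensity_pos hY.aemeasurable h1.1,
      ae_toReal_lawDensity_pos hXY h2.1, ae_toReal_lawDensity_pos hYZ h3.1,
      ae_toReal_lawDensity_pos hXYZ h4.1] with ω hp hq hr hs
    exact ⟨hp, hq, hr, hs⟩
  have hlog : (fun ω => Real.log
        (q (X ω + Y ω) * r (Y ω + Z ω) / (p (Y ω) * s (X ω + Y ω + Z ω))).toReal)
      =ᵐ[P] fun ω => Real.log (q (X ω + Y ω)).toReal + Real.log (r (Y ω + Z ω)).toReal
        - Real.log (p (Y ω)).toReal - Real.log (s (X ω + Y ω + Z ω)).toReal := by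
    filter_upwards [hpos] with ω ⟨hp, hq, hr, hs⟩
    exact ENNReal.log_toReal_mul_div_mul hq hr hp hs
  have hiY := h1.integrable_log_lawDensity hY.aemeasurable
  have hiXY := h2.integrable_log_lawDensity hXY
  have hiYZ := h3.integrable_log_lawDensity hYZ
  have hiXYZ := h4.integrable_log_lawDensity hXYZ
  have hgibbs := integral_log_toReal_nonpos_of_lintegral_le_one (by fun_prop)
    (hindep.lintegral_lawDensity_ratio_le_one hX hY hZ h1.1 h2.1 h3.1)
    (by
      filter_upwards [hpos] with ω ⟨hp, hq, hr, hs⟩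
      rw [ENNReal.toReal_div, ENNReal.toReal_mul, ENNReal.toReal_mul]
      positivity)
    ((((hiXY.fun_add hiYZ).sub' hiY).sub' hiXYZ).congr hlog.symm)
  rw [integral_congr_ae hlog, integral_sub ((hiXY.fun_add hiYZ).sub' hiY) hiXYZ,
    integral_sub (hiXY.fun_add hiYZ) hiY, integral_add hiXY hiYZ] at hgibbs
  linarith

end Submodularity

/-- Submodularity inequality: if `X, Y, Z` are independent `ℝ^d`-valued random variables such
that `Y`, `X+Y`, `Y+Z`, `X+Y+Z` have absolutely continuous laws with finite differential
entropy, then `H(X+Y+Z) + H(Y) ≤ H(X+Y) + H(Y+Z)`. -/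
theorem stmt8 {d : ℕ} {Ω : Type*} [MeasurableSpace Ω] (P : Measure Ω) [IsProbabilityMeasure P]
    (X Y Z : Ω → (Fin d → ℝ)) (hX : Measurable X) (hY : Measurable Y) (hZ : Measurable Z)
    (hindep : iIndepFun ![X, Y, Z] P)
    (h1 : HasDiffEnt (P.map Y))
    (h2 : HasDiffEnt (P.map (fun ω => X ω + Y ω)))
    (h3 : HasDiffEnt (P.map (fun ω => Y ω + Z ω)))
    (h4 : HasDiffEnt (P.map (fun ω => X ω + Y ω + Z ω))) :
    diffEnt (P.map (fun ω => X ω + Y ω + Z ω)) + diffEnt (P.map Y) ≤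
      diffEnt (P.map (fun ω => X ω + Y ω)) + diffEnt (P.map (fun ω => Y ω + Z ω)) := by
  have hXY : AEMeasurable (fun ω => X ω + Y ω) P := by fun_prop
  have hYZ : AEMeasurable (fun ω => Y ω + Z ω) P := by fun_prop
  have hXYZ : AEMeasurable (fun ω => X ω + Y ω + Z ω) P := by fun_prop
  have h := hindep.integral_log_lawDensity_le hX hY hZ h1 h2 h3 h4
  rw [diffEnt_map_eq_integral_log_lawDensity hXYZ h4.1,
    diffEnt_map_eq_integral_log_lawDensity hY.aemeasurable h1.1,
    diffEnt_map_eq_integral_log_lawDensity hXY h2.1,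
    diffEnt_map_eq_integral_log_lawDensity hYZ h3.1,
    ← add_div, ← add_div, div_le_div_iff_of_pos_right (Real.log_pos one_lt_two)]
  linarith
end

section
/- Let X be an absolutely continuous ℝ^d-valued random variable with finite differential entropy, and let {A_n} be an increasing sequence of events of positive probability with lim_{n→∞} P(A_n) = 1. For each n let X|_{A_n} denote a random variable whose law is B ↦ P({X ∈ B} ∩ A_n)/P(A_n). Then H(X) = lim_{n→∞} H(X|_{A_n}). -/
open MeasureTheory ProbabilityTheory

/-! Let `f` be the density of `X` and `f_n` that of `X|_{A_n}`. The unnormalised laws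
`B ↦ P({X ∈ B} ∩ A_n)` increase setwise to the law of `X`, so their densities `g_n` increase
a.e. to `f`, and `f_n = g_n / P(A_n) → f` a.e. Once `P(A_n) > 1/2` we have `0 ≤ f_n ≤ 2 f`, and
writing `f_n = s f` with `0 ≤ s ≤ 2` gives `|f_n log f_n| ≤ f |s log s| + 2 |f log f|
≤ (1 + 2 log 2) f + 2 |f log f|`, an integrable bound; dominated convergence concludes. -/

open Filter Topology Real
open scoped ENNReal

lemma mul_abs_log_le_one_add_mul_log {s C : ℝ} (hC : 1 ≤ C) (hs : 0 ≤ s) (hsC : s ≤ C) :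
    s * |log s| ≤ 1 + C * log C := by
  have hCC : 0 ≤ C * log C := mul_nonneg (by linarith) (log_nonneg hC)
  rcases hs.eq_or_lt with rfl | hs
  · simp only [zero_mul]; linarith
  rcases le_or_gt s 1 with hs1 | hs1
  · have := abs_log_mul_self_lt s hs hs1
    rw [abs_mul, abs_of_pos hs] at this
    linarith
  · rw [abs_of_nonneg (log_nonneg hs1.le)]
    have := log_le_log hs hsC
    nlinarith [log_nonneg hs1.le]

lemma abs_mul_log_le_of_le_mul {y f C : ℝ} (hC : 1 ≤ C) (hy : 0 ≤ y) (hyf : y ≤ C * f) :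
    |y * log y| ≤ (1 + C * log C) * f + C * |f * log f| := by
  have hf : 0 ≤ f := nonneg_of_mul_nonneg_right (hy.trans hyf) (by linarith)
  rcases hy.eq_or_lt with rfl | hy
  · simp only [zero_mul, abs_zero]
    have : 0 ≤ 1 + C * log C := by nlinarith [log_nonneg hC]
    positivity
  have hf : 0 < f := by nlinarith
  set s := y / f
  have hys : y = s * f := (div_mul_cancel₀ y hf.ne').symm
  have hs : 0 < s := div_pos hy hf
  have hsC : s ≤ C := (div_le_iff₀ hf).2 hyf
  calc |y * log y| = |f * (s * log s) + s * (f * log f)| := by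
        rw [hys, log_mul hs.ne' hf.ne']; ring_nf
    _ ≤ f * (s * |log s|) + s * |f * log f| := by
        refine (abs_add_le _ _).trans_eq ?_
        rw [abs_mul, abs_mul, abs_mul, abs_of_pos hf, abs_of_pos hs]
    _ ≤ f * (1 + C * log C) + C * |f * log f| := by
        gcongr
        exact mul_abs_log_le_one_add_mul_log hC hs.le hsC
    _ = (1 + C * log C) * f + C * |f * log f| := by ring

lemma abs_mul_logb_le_of_le_mul {b y f C : ℝ} (hC : 1 ≤ C) (hy : 0 ≤ y) (hyf : y ≤ C * f) :
    |y * logb b y| ≤ (1 + C * log C) / |log b| * f + C * |f * logb b f| := by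
  have hlogb : ∀ z, |z * logb b z| = |z * log z| / |log b| := fun z => by
    rw [logb, ← mul_div_assoc, abs_div]
  rw [hlogb, hlogb, mul_div_assoc', div_mul_eq_mul_div, ← add_div]
  exact div_le_div_of_nonneg_right (abs_mul_log_le_of_le_mul hC hy hyf) (abs_nonneg _)

lemma continuous_mul_logb (b : ℝ) : Continuous fun y : ℝ => y * logb b y := by
  simpa only [logb, mul_div_assoc] using continuous_mul_log.div_const (log b)

theorem tendsto_integral_mul_logb_of_le_mul {α ι : Type*} [MeasurableSpace α] {μ : Measure α}
    {l : Filter ι} [l.IsCountablyGenerated] {b C : ℝ} (hC : 1 ≤ C) {f : α → ℝ} {g : ι → α → ℝ}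
    (hf : Integrable f μ) (hf_log : Integrable (fun x => f x * logb b (f x)) μ)
    (hg : ∀ᶠ n in l, AEStronglyMeasurable (g n) μ)
    (hgf : ∀ᶠ n in l, ∀ᵐ x ∂μ, 0 ≤ g n x ∧ g n x ≤ C * f x)
    (hlim : ∀ᵐ x ∂μ, Tendsto (fun n => g n x) l (𝓝 (f x))) :
    Tendsto (fun n => ∫ x, g n x * logb b (g n x) ∂μ) l (𝓝 (∫ x, f x * logb b (f x) ∂μ)) := by
  refine tendsto_integral_filter_of_dominated_convergence
    (fun x => (1 + C * log C) / |log b| * f x + C * |f x * logb b (f x)|)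
    (hg.mono fun n hn => (continuous_mul_logb b).comp_aestronglyMeasurable hn)
    (hgf.mono fun n hn => hn.mono fun x hx => abs_mul_logb_le_of_le_mul hC hx.1 hx.2)
    ((hf.const_mul _).add (hf_log.abs.const_mul _))
    (hlim.mono fun x hx => ((continuous_mul_logb b).tendsto (f x)).comp hx)

namespace MeasureTheory.Measure

variable {α : Type*} [MeasurableSpace α]

lemma le_of_iSup_apply_eq {ι : Type*} {μ : Measure α} {ν : ι → Measure α}
    (hsup : ∀ s, MeasurableSet s → ⨆ n, ν n s = μ s) (n : ι) : ν n ≤ μ :=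
  le_iff.2 fun s hs => (le_iSup (fun m => ν m s) n).trans_eq (hsup s hs)

lemma rnDeriv_mono {μ₁ μ₂ ρ : Measure α} [SigmaFinite μ₁] [SigmaFinite μ₂] [SigmaFinite ρ]
    (h : μ₁ ≤ μ₂) (hμ₂ : μ₂ ≪ ρ) : μ₁.rnDeriv ρ ≤ᵐ[ρ] μ₂.rnDeriv ρ := by
  refine ae_le_of_forall_setLIntegral_le_of_sigmaFinite (measurable_rnDeriv _ _)
    fun s _ _ => ?_
  rw [setLIntegral_rnDeriv ((absolutelyContinuous_of_le h).trans hμ₂),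
    setLIntegral_rnDeriv hμ₂]
  exact h s

lemma ae_tendsto_rnDeriv_of_iSup {μ ρ : Measure α} [IsFiniteMeasure μ] [SigmaFinite ρ]
    {ν : ℕ → Measure α} (hν : Monotone ν) (hsup : ∀ s, MeasurableSet s → ⨆ n, ν n s = μ s)
    (hμ : μ ≪ ρ) :
    ∀ᵐ x ∂ρ, Tendsto (fun n => (ν n).rnDeriv ρ x) atTop (𝓝 (μ.rnDeriv ρ x)) := by
  have hle := le_of_iSup_apply_eq hsup
  have hfin : ∀ n, IsFiniteMeasure (ν n) := fun n => isFiniteMeasure_of_le μ (hle n)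
  have hνρ : ∀ n, ν n ≪ ρ := fun n => (absolutelyContinuous_of_le (hle n)).trans hμ
  have hmono : ∀ᵐ x ∂ρ, Monotone fun n => (ν n).rnDeriv ρ x := by
    have := ae_all_iff.2 fun n => rnDeriv_mono (hν n.le_succ) (hνρ (n + 1))
    exact this.mono fun x hx => monotone_nat_of_le_succ hx
  have hwd : ρ.withDensity (fun x => ⨆ n, (ν n).rnDeriv ρ x) = μ := by
    ext s hs
    rw [withDensity_apply _ hs, ← hsup s hs,
      lintegral_iSup' (fun n => (measurable_rnDeriv _ _).aemeasurable) (ae_restrict_of_ae hmono)]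
    exact iSup_congr fun n => setLIntegral_rnDeriv (hνρ n) s
  have hsup_ae : (fun x => ⨆ n, (ν n).rnDeriv ρ x) =ᵐ[ρ] μ.rnDeriv ρ := by
    simpa only [hwd] using
      (rnDeriv_withDensity ρ (Measurable.iSup fun n => measurable_rnDeriv (ν n) ρ)).symm
  filter_upwards [hmono, hsup_ae] with x hx hx_sup
  exact hx_sup ▸ tendsto_atTop_iSup hx

end MeasureTheory.Measure

theorem tendsto_diffEnt_smul_of_iSup {E : Type*} [MeasureSpace E] [SigmaFinite (volume : Measure E)]
    {μ : Measure E} [IsFiniteMeasure μ] (hμ : HasDiffEnt μ) {ν : ℕ → Measure E} (hν : Monotone ν)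
    (hsup : ∀ s, MeasurableSet s → ⨆ n, ν n s = μ s) {c : ℕ → ℝ≥0∞}
    (hc : Tendsto c atTop (𝓝 1)) :
    Tendsto (fun n => diffEnt (c n • ν n)) atTop (𝓝 (diffEnt μ)) := by
  have hle := Measure.le_of_iSup_apply_eq hsup
  have hfin : ∀ n, IsFiniteMeasure (ν n) := fun n => isFiniteMeasure_of_le μ (hle n)
  have hc_lt : ∀ᶠ n in atTop, c n < 2 := hc.eventually (gt_mem_nhds ENNReal.one_lt_two)
  have hsmul : ∀ᵐ x, ∀ n, c n ≠ ∞ →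
      (c n • ν n).rnDeriv volume x = c n * (ν n).rnDeriv volume x :=
    ae_all_iff.2 fun n => by
      by_cases hn : c n = ∞
      · simp [hn]
      · filter_upwards [Measure.rnDeriv_smul_left_of_ne_top (ν n) volume hn] with x hx
        simp [hx]
  have hμ_fin : ∀ᵐ x, μ.rnDeriv volume x ≠ ∞ := Measure.rnDeriv_ne_top μ volume
  have hdom : ∀ᵐ x, ∀ n, (ν n).rnDeriv volume x ≤ μ.rnDeriv volume x :=
    ae_all_iff.2 fun n => Measure.rnDeriv_mono (hle n) hμ.1
  refine (tendsto_integral_mul_logb_of_le_mul one_le_two Measure.integrable_toReal_rnDeriv hμ.2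
    (.of_forall fun n => (Measure.measurable_rnDeriv _ _).ennreal_toReal.aestronglyMeasurable)
    ?_ ?_).neg
  · filter_upwards [hc_lt] with n hn
    filter_upwards [hsmul, hdom, hμ_fin] with x hx_smul hx_dom hx_fin
    refine ⟨ENNReal.toReal_nonneg, ?_⟩
    rw [hx_smul n hn.ne_top, ← ENNReal.toReal_ofNat 2, ← ENNReal.toReal_mul]
    exact ENNReal.toReal_mono (ENNReal.mul_ne_top ENNReal.ofNat_ne_top hx_fin)
      (mul_le_mul' hn.le (hx_dom n))
  · filter_upwards [hsmul, Measure.ae_tendsto_rnDeriv_of_iSup hν hsup hμ.1, hμ_fin]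
      with x hx_smul hx_lim hx_fin
    have hlim : Tendsto (fun n => c n * (ν n).rnDeriv volume x) atTop (𝓝 (μ.rnDeriv volume x)) := by
      simpa using ENNReal.Tendsto.mul hc (.inl one_ne_zero) hx_lim (.inr ENNReal.one_ne_top)
    refine ((ENNReal.tendsto_toReal hx_fin).comp hlim).congr' ?_
    filter_upwards [hc_lt] with n hn
    simp [hx_smul n hn.ne_top]

lemma iSup_measure_inter_eq_of_tendsto_one {Ω : Type*} [MeasurableSpace Ω] {P : Measure Ω}
    [IsProbabilityMeasure P] {A : ℕ → Set Ω} (hA : Monotone A)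
    (hlim : Tendsto (fun n => P (A n)) atTop (𝓝 1)) {s : Set Ω} (hs : MeasurableSet s) :
    ⨆ n, P (s ∩ A n) = P s := by
  have hU : P (⋃ n, A n) = P Set.univ :=
    (tendsto_nhds_unique (tendsto_measure_iUnion_atTop hA) hlim).trans measure_univ.symm
  rw [← (monotone_const.inter hA).measure_iUnion,
    ← Set.inter_iUnion, Set.inter_comm, Measure.measure_inter_eq_of_measure_eq hs hU
      (Set.subset_univ _) (measure_ne_top _ _), Set.univ_inter]

theorem stmt10_general {d : ℕ} {Ω : Type*} [MeasurableSpace Ω] (P : Measure Ω) [IsProbabilityMeasure P]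
    (X : Ω → (Fin d → ℝ)) (hX : Measurable X) (hent : HasDiffEnt (P.map X))
    (A : ℕ → Set Ω) (hmono : Monotone A)
    (hlim : Filter.Tendsto (fun n => P (A n)) Filter.atTop (nhds 1)) :
    Filter.Tendsto (fun n => diffEnt ((P (A n))⁻¹ • ((P.restrict (A n)).map X)))
      Filter.atTop (nhds (diffEnt (P.map X))) := by
  have : IsProbabilityMeasure (P.map X) := Measure.isProbabilityMeasure_map hX.aemeasurable
  refine tendsto_diffEnt_smul_of_iSup hent
    (fun m n h => Measure.map_mono (Measure.restrict_mono (hmono h) le_rfl) hX) (fun s hs => ?_)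
    (by simpa using (tendsto_inv_iff.2 hlim : Tendsto (fun n => (P (A n))⁻¹) atTop (𝓝 1⁻¹)))
  simp only [Measure.map_apply hX hs, Measure.restrict_apply (hX hs)]
  exact iSup_measure_inter_eq_of_tendsto_one hmono hlim (hX hs)

/-- If `X` is an absolutely continuous `ℝ^d`-valued random variable with finite differential
entropy and `{A_n}` is an increasing sequence of events with `P(A_n) → 1`, then
`H(X) = lim_n H(X|_{A_n})`, where `X|_{A_n}` has law `B ↦ P({X ∈ B} ∩ A_n)/P(A_n)`. -/
theorem stmt10 {d : ℕ} {Ω : Type*} [MeasurableSpace Ω] (P : Measure Ω) [IsProbabilityMeasure P]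
    (X : Ω → (Fin d → ℝ)) (hX : Measurable X) (hent : HasDiffEnt (P.map X))
    (A : ℕ → Set Ω) (hAmeas : ∀ n, MeasurableSet (A n)) (hmono : Monotone A)
    (hpos : ∀ n, 0 < P (A n))
    (hlim : Filter.Tendsto (fun n => P (A n)) Filter.atTop (nhds 1)) :
    Filter.Tendsto (fun n => diffEnt ((P (A n))⁻¹ • ((P.restrict (A n)).map X)))
      Filter.atTop (nhds (diffEnt (P.map X))) :=
  stmt10_general P X hX hent A hmono hlim
end

section
/- Let ν₀ be a finitely supported probability measure on ℝ. Then the function Φ_{ν₀} is monotone increasing on (0, ∞), and for every a > 1 one has Φ_{ν₀}(a)/log₂ a ≥ Φ_{ν₀}(a²)/log₂(a²), i.e. Φ_{ν₀}(a²) ≤ 2·Φ_{ν₀}(a). -/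
open MeasureTheory ProbabilityTheory

/-- The law of `t·ξ₀` where `ξ₀` has the finitely supported law `ν` on `ℝ`. -/
noncomputable def discLaw (ν : ℝ →₀ ℝ) (t : ℝ) : MeasureTheory.Measure ℝ :=
  ∑ q ∈ ν.support, ENNReal.ofReal (ν q) • MeasureTheory.Measure.dirac (t * q)

/-- The differential entropy `H(t·ξ₀ + G)` where `G` is a standard Gaussian independent
of `ξ₀ ~ ν`. -/
noncomputable def smoothEnt (ν : ℝ →₀ ℝ) (t : ℝ) : ℝ :=
  diffEnt (mconv (discLaw ν t) (ProbabilityTheory.gaussianReal 0 1))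

/-- `Φ_ν(a) = sup_{t>0} { H(t·a·ξ₀ + G) − H(t·ξ₀ + G) }`. -/
noncomputable def Phi (ν : ℝ →₀ ℝ) (a : ℝ) : ℝ :=
  sSup {r : ℝ | ∃ t : ℝ, 0 < t ∧ r = smoothEnt ν (t * a) - smoothEnt ν t}

/-- `ν` is a finitely supported probability measure on `ℝ`. -/
def IsProbFinsuppR (ν : ℝ →₀ ℝ) : Prop := (∀ q, 0 ≤ ν q) ∧ (∑ q ∈ ν.support, ν q) = 1

/-!
With `g` the standard Gaussian density, `f_t = Σ_q ν(q) g(· - t q)` is the density of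
`t ξ₀ + G` and `H(t ξ₀ + G) = H(G) + I_t`, where `I_t = Σ_q ν(q) KL(g(· - t q) ‖ f_t)` is the
mutual information of `ξ₀` and `t ξ₀ + G`. Pointwise Gibbs-type bounds give `0 ≤ I_t ≤ H(ν)`,
so the suprema defining `Φ` are finite. Rescaling shows that the mutual information of `ξ₀` and
`t ξ₀ + √v G` depends only on `t² / v`, and the log-sum inequality shows that it can only
decrease when independent Gaussian noise is added. Hence `t ↦ H(t ξ₀ + G)` is nondecreasing on
`(0, ∞)`, which makes `Φ` monotone, and `Φ(a²) ≤ 2 Φ(a)` follows by splitting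
`H(t a² ξ₀ + G) - H(t ξ₀ + G)` at `t a ξ₀ + G`.
-/

open Real
open scoped Convolution

lemma IsProbFinsuppR.support_nonempty {ν : ℝ →₀ ℝ} (hν : IsProbFinsuppR ν) :
    ν.support.Nonempty := by
  by_contra h
  simpa [Finset.not_nonempty_iff_eq_empty.mp h] using hν.2

lemma IsProbFinsuppR.pos_of_mem_support {ν : ℝ →₀ ℝ} (hν : IsProbFinsuppR ν) {q : ℝ}
    (hq : q ∈ ν.support) : 0 < ν q :=
  (hν.1 q).lt_of_ne' (Finsupp.mem_support_iff.mp hq)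

lemma sub_div_log_two_le_mul_logb_div {u w : ℝ} (hu : 0 < u) (hw : 0 < w) :
    (u - w) / log 2 ≤ u * logb 2 (u / w) := by
  have hlog := log_le_sub_one_of_pos (div_pos hw hu)
  have key : u - w ≤ u * log (u / w) := by
    rw [← neg_neg (log (u / w)), ← log_inv, inv_div]
    have : u * (w / u - 1) = w - u := by field_simp
    nlinarith [mul_le_mul_of_nonneg_left hlog hu.le]
  rw [logb, ← mul_div_assoc]
  exact div_le_div_of_nonneg_right key (log_pos one_lt_two).le

lemma mul_logb_div_le_integral_mul_logb_div {α : Type*} [MeasurableSpace α] {μ : Measure α}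
    {f g : α → ℝ} (hf : ∀ x, 0 < f x) (hg : ∀ x, 0 < g x) (hfi : Integrable f μ)
    (hgi : Integrable g μ) (hF : 0 < ∫ x, f x ∂μ) (hG : 0 < ∫ x, g x ∂μ)
    (hfg : Integrable (fun x => f x * logb 2 (f x / g x)) μ) :
    (∫ x, f x ∂μ) * logb 2 ((∫ x, f x ∂μ) / ∫ x, g x ∂μ)
      ≤ ∫ x, f x * logb 2 (f x / g x) ∂μ := by
  set r := (∫ x, f x ∂μ) / ∫ x, g x ∂μ
  have hr : 0 < r := div_pos hF hG
  have hpt : ∀ x, f x * logb 2 r + (f x - g x * r) / log 2 ≤ f x * logb 2 (f x / g x) := by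
    intro x
    have h := sub_div_log_two_le_mul_logb_div (hf x) (mul_pos (hg x) hr)
    rw [show f x / g x = f x / (g x * r) * r by field_simp,
      logb_mul (div_pos (hf x) (mul_pos (hg x) hr)).ne' hr.ne']
    linarith
  have h₁ : Integrable (fun x => f x * logb 2 r) μ := hfi.mul_const _
  have h₂ : Integrable (fun x => (f x - g x * r) / log 2) μ :=
    (hfi.sub (hgi.mul_const _)).div_const _
  have hlow :
      ∫ x, f x * logb 2 r + (f x - g x * r) / log 2 ∂μ = (∫ x, f x ∂μ) * logb 2 r := by
    rw [integral_add h₁ h₂, integral_div, integral_sub hfi (hgi.mul_const _), integral_mul_const,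
      integral_mul_const, mul_div_cancel₀ _ hG.ne', sub_self, zero_div, add_zero]
  rw [← hlow]
  exact integral_mono (h₁.add h₂) hfg hpt

instance sFinite_finset_sum {α ι : Type*} [MeasurableSpace α] (s : Finset ι)
    (μ : ι → Measure α) [∀ i, SFinite (μ i)] : SFinite (∑ i ∈ s, μ i) := by
  rw [← Finset.sum_coe_sort, ← Measure.sum_fintype]
  infer_instance

lemma Measure.finset_sum_conv {M ι : Type*} [AddMonoid M] [MeasurableSpace M] [MeasurableAdd₂ M]
    (s : Finset ι) (μ : ι → Measure M) [∀ i, SFinite (μ i)] (ρ : Measure M) [SFinite ρ] :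
    (∑ i ∈ s, μ i) ∗ ρ = ∑ i ∈ s, μ i ∗ ρ := by
  classical
  induction s using Finset.induction_on with
  | empty => simp
  | insert i s hi ih => rw [Finset.sum_insert hi, Finset.sum_insert hi, Measure.add_conv, ih]

lemma withDensity_finset_sum {α ι : Type*} [MeasurableSpace α] (μ : Measure α) (s : Finset ι)
    {f : ι → α → ENNReal} (hf : ∀ i, Measurable (f i)) :
    μ.withDensity (fun x => ∑ i ∈ s, f i x) = ∑ i ∈ s, μ.withDensity (f i) := by
  classical
  induction s using Finset.induction_on with
  | empty => simp
  | insert i s hi ih =>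
    simp_rw [Finset.sum_insert hi, ← ih, ← withDensity_add_left (hf i)]
    rfl

namespace GaussianMixture

noncomputable def gaussPDF (v x : ℝ) : ℝ := (√(2 * π * v))⁻¹ * exp (-x ^ 2 / (2 * v))

variable {v c : ℝ}

lemma gaussPDF_eq_gaussianPDFReal (hv : 0 < v) : gaussPDF v = gaussianPDFReal 0 ⟨v, hv.le⟩ := by
  funext x
  simp only [gaussPDF, gaussianPDFReal, sub_zero]
  rfl

lemma gaussPDF_pos (hv : 0 < v) (x : ℝ) : 0 < gaussPDF v x := by
  unfold gaussPDF
  positivity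

lemma gaussPDF_le (hv : 0 < v) (x : ℝ) : gaussPDF v x ≤ (√(2 * π * v))⁻¹ := by
  refine mul_le_of_le_one_right (by positivity) (exp_le_one_iff.mpr ?_)
  rw [neg_div, neg_nonpos]
  positivity

lemma continuous_gaussPDF : Continuous (gaussPDF v) := by
  unfold gaussPDF
  fun_prop

lemma integrable_gaussPDF (hv : 0 < v) : Integrable (gaussPDF v) := by
  rw [gaussPDF_eq_gaussianPDFReal hv]
  exact integrable_gaussianPDFReal 0 _

lemma integral_gaussPDF (hv : 0 < v) : ∫ x, gaussPDF v x = 1 := by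
  rw [gaussPDF_eq_gaussianPDFReal hv]
  exact integral_gaussianPDFReal_eq_one 0 fun h => hv.ne' (congrArg Subtype.val h)

lemma integral_gaussPDF_sub (hv : 0 < v) (m : ℝ) : ∫ x, gaussPDF v (x - m) = 1 := by
  rw [integral_sub_right_eq_self (gaussPDF v) m, integral_gaussPDF hv]

lemma integrable_gaussPDF_mul_comp_sub (hv : 0 < v) {f : ℝ → ℝ} (hf : Continuous f) {C : ℝ}
    (hC : ∀ x, |f x| ≤ C) (x : ℝ) : Integrable (fun y => gaussPDF v y * f (x - y)) :=
  (integrable_gaussPDF hv).mul_bdd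
    (hf.comp (continuous_const.sub continuous_id)).aestronglyMeasurable
    (ae_of_all _ fun y => hC (x - y))

lemma abs_gaussPDF_le (hv : 0 < v) (x : ℝ) : |gaussPDF v x| ≤ (√(2 * π * v))⁻¹ := by
  rw [abs_of_pos (gaussPDF_pos hv x)]
  exact gaussPDF_le hv x

lemma log_gaussPDF (hv : 0 < v) (x : ℝ) :
    log (gaussPDF v x) = -log √(2 * π * v) - x ^ 2 / (2 * v) := by
  unfold gaussPDF
  rw [log_mul (by positivity) (exp_ne_zero _), log_inv, log_exp]
  ring

lemma integrable_sq_mul_gaussPDF (hv : 0 < v) : Integrable (fun x => x ^ 2 * gaussPDF v x) := by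
  refine ((integrable_rpow_mul_exp_neg_mul_sq (b := (2 * v)⁻¹) (by positivity)
    (s := 2) (by norm_num)).const_mul (√(2 * π * v))⁻¹).congr (ae_of_all _ fun x => ?_)
  simp only [gaussPDF, rpow_two]
  ring_nf

lemma integrable_gaussPDF_mul_logb (hv : 0 < v) :
    Integrable (fun x => gaussPDF v x * logb 2 (gaussPDF v x)) := by
  refine (((integrable_gaussPDF hv).const_mul (-log √(2 * π * v) / log 2)).sub
    ((integrable_sq_mul_gaussPDF hv).const_mul ((2 * v)⁻¹ / log 2))).congr
    (ae_of_all _ fun x => ?_)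
  simp only [Pi.sub_apply, logb, log_gaussPDF hv]
  ring

lemma gaussPDF_scale (hc : 0 < c) (x : ℝ) :
    gaussPDF (c ^ 2 * v) x = c⁻¹ * gaussPDF v (x / c) := by
  have hsqrt : √(2 * π * (c ^ 2 * v)) = c * √(2 * π * v) := by
    rw [show 2 * π * (c ^ 2 * v) = c ^ 2 * (2 * π * v) by ring, sqrt_mul (sq_nonneg c),
      sqrt_sq hc.le]
  simp only [gaussPDF, hsqrt, mul_inv, div_pow]
  field_simp

lemma gaussPDF_mul_gaussPDF_sub {a b : ℝ} (ha : 0 < a) (hb : 0 < b) (z y : ℝ) :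
    gaussPDF a y * gaussPDF b (z - y)
      = gaussPDF (a + b) z * gaussPDF (a * b / (a + b)) (y - a * z / (a + b)) := by
  have hab : 0 < a + b := by positivity
  have hexp : exp (-y ^ 2 / (2 * a)) * exp (-(z - y) ^ 2 / (2 * b))
      = exp (-z ^ 2 / (2 * (a + b)))
        * exp (-(y - a * z / (a + b)) ^ 2 / (2 * (a * b / (a + b)))) := by
    rw [← exp_add, ← exp_add]
    congr 1
    field_simp
    ring
  have hnorm : (√(2 * π * a))⁻¹ * (√(2 * π * b))⁻¹
      = (√(2 * π * (a + b)))⁻¹ * (√(2 * π * (a * b / (a + b))))⁻¹ := by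
    rw [← mul_inv, ← mul_inv, ← sqrt_mul (by positivity), ← sqrt_mul (by positivity)]
    congr 2
    field_simp
  unfold gaussPDF
  linear_combination exp (-y ^ 2 / (2 * a)) * exp (-(z - y) ^ 2 / (2 * b)) * hnorm
    + (√(2 * π * (a + b)))⁻¹ * (√(2 * π * (a * b / (a + b))))⁻¹ * hexp

lemma integral_gaussPDF_mul_gaussPDF_sub {a b : ℝ} (ha : 0 < a) (hb : 0 < b) (z : ℝ) :
    ∫ y, gaussPDF a y * gaussPDF b (z - y) = gaussPDF (a + b) z := by
  simp_rw [gaussPDF_mul_gaussPDF_sub ha hb z, integral_const_mul,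
    integral_gaussPDF_sub (show 0 < a * b / (a + b) by positivity), mul_one]

-- The density of `t ξ₀ + √v G`.
noncomputable def mixPDF (ν : ℝ →₀ ℝ) (t v x : ℝ) : ℝ :=
  ∑ q ∈ ν.support, ν q * gaussPDF v (x - t * q)

variable {ν : ℝ →₀ ℝ} {t : ℝ}

lemma mul_gaussPDF_le_mixPDF (hν : IsProbFinsuppR ν) (hv : 0 < v) {q : ℝ}
    (hq : q ∈ ν.support) (x : ℝ) : ν q * gaussPDF v (x - t * q) ≤ mixPDF ν t v x :=
  Finset.single_le_sum (f := fun r => ν r * gaussPDF v (x - t * r))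
    (fun r _ => mul_nonneg (hν.1 r) (gaussPDF_pos hv _).le) hq

lemma mixPDF_pos (hν : IsProbFinsuppR ν) (hv : 0 < v) (x : ℝ) : 0 < mixPDF ν t v x := by
  obtain ⟨q, hq⟩ := hν.support_nonempty
  exact (mul_pos (hν.pos_of_mem_support hq) (gaussPDF_pos hv _)).trans_le
    (mul_gaussPDF_le_mixPDF hν hv hq x)

lemma mixPDF_le (hν : IsProbFinsuppR ν) (hv : 0 < v) (x : ℝ) :
    mixPDF ν t v x ≤ (√(2 * π * v))⁻¹ := by
  calc mixPDF ν t v x ≤ ∑ q ∈ ν.support, ν q * (√(2 * π * v))⁻¹ :=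
        Finset.sum_le_sum fun q _ => mul_le_mul_of_nonneg_left (gaussPDF_le hv _) (hν.1 q)
  _ = (√(2 * π * v))⁻¹ := by rw [← Finset.sum_mul, hν.2, one_mul]

lemma continuous_mixPDF : Continuous (mixPDF ν t v) := by
  unfold mixPDF
  have := continuous_gaussPDF (v := v)
  fun_prop

lemma integrable_mixPDF (hv : 0 < v) : Integrable (mixPDF ν t v) :=
  integrable_finsetSum _ fun q _ => ((integrable_gaussPDF hv).comp_sub_right (t * q)).const_mul _

lemma integral_mixPDF (hν : IsProbFinsuppR ν) (hv : 0 < v) : ∫ x, mixPDF ν t v x = 1 := by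
  unfold mixPDF
  rw [integral_finsetSum _ fun q _ => ((integrable_gaussPDF hv).comp_sub_right _).const_mul _]
  simp_rw [integral_const_mul, integral_gaussPDF_sub hv, mul_one]
  exact hν.2

lemma mixPDF_scale (hc : 0 < c) (x : ℝ) :
    mixPDF ν (c * t) (c ^ 2 * v) x = c⁻¹ * mixPDF ν t v (x / c) := by
  simp only [mixPDF, gaussPDF_scale hc, Finset.mul_sum]
  refine Finset.sum_congr rfl fun q _ => ?_
  rw [show (x - c * t * q) / c = x / c - t * q by field_simp]
  ring

lemma integral_gaussPDF_mul_mixPDF_sub {a b : ℝ} (ha : 0 < a) (hb : 0 < b) (x : ℝ) :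
    ∫ y, gaussPDF a y * mixPDF ν t b (x - y) = mixPDF ν t (a + b) x := by
  simp only [mixPDF, Finset.mul_sum, mul_left_comm (gaussPDF a _),
    show ∀ y q, x - y - t * q = (x - t * q) - y from fun _ _ => by ring]
  rw [integral_finsetSum _ fun q _ =>
    (integrable_gaussPDF_mul_comp_sub ha continuous_gaussPDF (abs_gaussPDF_le hb) _).const_mul _]
  simp_rw [integral_const_mul, integral_gaussPDF_mul_gaussPDF_sub ha hb]

/- `mutualInfo ν t v` is the mutual information of `ξ₀` and `t ξ₀ + √v G`, written as
`Σ_q ν(q) KL(N(t q, v) ‖ law of t ξ₀ + √v G)`; `klDensity` is the integrand of that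
KL divergence. -/
noncomputable def klDensity (ν : ℝ →₀ ℝ) (t v q x : ℝ) : ℝ :=
  gaussPDF v (x - t * q) * logb 2 (gaussPDF v (x - t * q) / mixPDF ν t v x)

noncomputable def mutualInfo (ν : ℝ →₀ ℝ) (t v : ℝ) : ℝ :=
  ∑ q ∈ ν.support, ν q * ∫ x, klDensity ν t v q x

noncomputable def entropy (f : ℝ → ℝ) : ℝ := -∫ x, f x * logb 2 (f x)

noncomputable def shannonEntropy (ν : ℝ →₀ ℝ) : ℝ :=
  ∑ q ∈ ν.support, ν q * logb 2 (ν q)⁻¹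

section klDensity

variable (hν : IsProbFinsuppR ν) (hv : 0 < v)
include hν hv

lemma sub_div_log_two_le_klDensity (q x : ℝ) :
    (gaussPDF v (x - t * q) - mixPDF ν t v x) / log 2 ≤ klDensity ν t v q x :=
  sub_div_log_two_le_mul_logb_div (gaussPDF_pos hv _) (mixPDF_pos hν hv x)

lemma klDensity_le {q : ℝ} (hq : q ∈ ν.support) (x : ℝ) :
    klDensity ν t v q x ≤ gaussPDF v (x - t * q) * logb 2 (ν q)⁻¹ := by
  have hνq := hν.pos_of_mem_support hq
  refine mul_le_mul_of_nonneg_left (logb_le_logb_of_le one_lt_two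
    (div_pos (gaussPDF_pos hv _) (mixPDF_pos hν hv x)) ?_) (gaussPDF_pos hv _).le
  rw [div_le_iff₀ (mixPDF_pos hν hv x), inv_mul_eq_div, le_div_iff₀ hνq, mul_comm]
  exact mul_gaussPDF_le_mixPDF hν hv hq x

lemma continuous_klDensity (q : ℝ) : Continuous (klDensity ν t v q) := by
  have hg : Continuous fun x => gaussPDF v (x - t * q) := continuous_gaussPDF.comp (by fun_prop)
  have hratio := hg.div (continuous_mixPDF (t := t)) fun x => (mixPDF_pos hν hv x).ne'
  have hlog := hratio.log fun x => (div_pos (gaussPDF_pos hv _) (mixPDF_pos hν hv x)).ne'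
  exact hg.mul (hlog.div_const _)

lemma integrable_klDensity {q : ℝ} (hq : q ∈ ν.support) : Integrable (klDensity ν t v q) :=
  integrable_of_le_of_le (continuous_klDensity hν hv q).aestronglyMeasurable
    (ae_of_all _ (sub_div_log_two_le_klDensity hν hv q)) (ae_of_all _ (klDensity_le hν hv hq))
    ((((integrable_gaussPDF hv).comp_sub_right _).sub (integrable_mixPDF hv)).div_const _)
    (((integrable_gaussPDF hv).comp_sub_right _).mul_const _)

lemma abs_klDensity_le {q : ℝ} (hq : q ∈ ν.support) (x : ℝ) :
    |klDensity ν t v q x| ≤ (√(2 * π * v))⁻¹ * (|logb 2 (ν q)⁻¹| + (log 2)⁻¹) := by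
  have hM : 0 ≤ (√(2 * π * v))⁻¹ := by positivity
  have hlog2 : 0 ≤ (log 2)⁻¹ := inv_nonneg.2 (log_pos one_lt_two).le
  rw [abs_le]
  constructor
  · calc -((√(2 * π * v))⁻¹ * (|logb 2 (ν q)⁻¹| + (log 2)⁻¹))
        ≤ -(√(2 * π * v))⁻¹ * (log 2)⁻¹ := by nlinarith [abs_nonneg (logb 2 (ν q)⁻¹)]
      _ ≤ (gaussPDF v (x - t * q) - mixPDF ν t v x) / log 2 := by
        rw [div_eq_mul_inv]
        have := mixPDF_le hν hv (t := t) x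
        have := gaussPDF_pos hv (x - t * q)
        exact mul_le_mul_of_nonneg_right (by linarith) hlog2
      _ ≤ klDensity ν t v q x := sub_div_log_two_le_klDensity hν hv q x
  · calc klDensity ν t v q x ≤ gaussPDF v (x - t * q) * logb 2 (ν q)⁻¹ :=
          klDensity_le hν hv hq x
      _ ≤ (√(2 * π * v))⁻¹ * |logb 2 (ν q)⁻¹| :=
        (mul_le_mul_of_nonneg_left (le_abs_self _) (gaussPDF_pos hv _).le).trans
          (mul_le_mul_of_nonneg_right (gaussPDF_le hv _) (abs_nonneg _))
      _ ≤ (√(2 * π * v))⁻¹ * (|logb 2 (ν q)⁻¹| + (log 2)⁻¹) := by gcongr; linarith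

lemma mutualInfo_nonneg : 0 ≤ mutualInfo ν t v := by
  refine Finset.sum_nonneg fun q hq => mul_nonneg (hν.1 q) ?_
  calc (0 : ℝ) = ∫ x, (gaussPDF v (x - t * q) - mixPDF ν t v x) / log 2 := by
        rw [integral_div, integral_sub ((integrable_gaussPDF hv).comp_sub_right _)
          (integrable_mixPDF hv), integral_gaussPDF_sub hv, integral_mixPDF hν hv, sub_self,
          zero_div]
    _ ≤ ∫ x, klDensity ν t v q x :=
        integral_mono ((((integrable_gaussPDF hv).comp_sub_right _).sub
          (integrable_mixPDF hv)).div_const _) (integrable_klDensity hν hv hq)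
          (sub_div_log_two_le_klDensity hν hv q)

lemma mutualInfo_le_shannonEntropy : mutualInfo ν t v ≤ shannonEntropy ν := by
  refine Finset.sum_le_sum fun q hq => mul_le_mul_of_nonneg_left ?_ (hν.1 q)
  calc ∫ x, klDensity ν t v q x ≤ ∫ x, gaussPDF v (x - t * q) * logb 2 (ν q)⁻¹ :=
        integral_mono (integrable_klDensity hν hv hq)
          (((integrable_gaussPDF hv).comp_sub_right _).mul_const _) (klDensity_le hν hv hq)
    _ = logb 2 (ν q)⁻¹ := by rw [integral_mul_const, integral_gaussPDF_sub hv, one_mul]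

lemma integral_klDensity {q : ℝ} (hq : q ∈ ν.support) :
    ∫ x, klDensity ν t v q x = (∫ x, gaussPDF v x * logb 2 (gaussPDF v x))
      - ∫ x, gaussPDF v (x - t * q) * logb 2 (mixPDF ν t v x) := by
  have hsplit : ∀ x, gaussPDF v (x - t * q) * logb 2 (mixPDF ν t v x)
      = gaussPDF v (x - t * q) * logb 2 (gaussPDF v (x - t * q)) - klDensity ν t v q x := by
    intro x
    rw [klDensity, logb_div (gaussPDF_pos hv _).ne' (mixPDF_pos hν hv x).ne']
    ring
  simp_rw [hsplit]
  rw [integral_sub ((integrable_gaussPDF_mul_logb hv).comp_sub_right (t * q))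
    (integrable_klDensity hν hv hq),
    integral_sub_right_eq_self (fun x => gaussPDF v x * logb 2 (gaussPDF v x))]
  ring

lemma entropy_mixPDF : entropy (mixPDF ν t v) = entropy (gaussPDF v) + mutualInfo ν t v := by
  have hint : ∀ q ∈ ν.support,
      Integrable (fun x => ν q * (gaussPDF v (x - t * q) * logb 2 (mixPDF ν t v x))) := by
    intro q hq
    refine ((((integrable_gaussPDF_mul_logb hv).comp_sub_right (t * q)).sub
      (integrable_klDensity hν hv (t := t) hq)).const_mul (ν q)).congr (ae_of_all _ fun x => ?_)
    simp only [Pi.sub_apply, klDensity,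
      logb_div (gaussPDF_pos hv _).ne' (mixPDF_pos hν hv x).ne']
    ring
  have hmix : ∫ x, mixPDF ν t v x * logb 2 (mixPDF ν t v x)
      = ∑ q ∈ ν.support, ν q * ∫ x, gaussPDF v (x - t * q) * logb 2 (mixPDF ν t v x) := by
    simp_rw [← integral_const_mul]
    rw [← integral_finsetSum _ hint]
    refine integral_congr_ae (ae_of_all _ fun x => ?_)
    change (∑ q ∈ ν.support, ν q * gaussPDF v (x - t * q)) * _ = _
    simp_rw [Finset.sum_mul, mul_assoc]
  have hsum : mutualInfo ν t v = (∫ x, gaussPDF v x * logb 2 (gaussPDF v x))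
      - ∑ q ∈ ν.support, ν q * ∫ x, gaussPDF v (x - t * q) * logb 2 (mixPDF ν t v x) := by
    rw [mutualInfo, Finset.sum_congr rfl fun q hq => by rw [integral_klDensity hν hv hq]]
    simp_rw [mul_sub, Finset.sum_sub_distrib, ← Finset.sum_mul, hν.2, one_mul]
  rw [entropy, entropy, hmix, hsum]
  ring

end klDensity

lemma klDensity_scale (hc : 0 < c) (q x : ℝ) :
    klDensity ν (c * t) (c ^ 2 * v) q x = c⁻¹ * klDensity ν t v q (x / c) := by
  have harg : (x - c * (t * q)) / c = x / c - t * q := by field_simp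
  simp only [klDensity, gaussPDF_scale hc, mixPDF_scale hc, harg,
    mul_div_mul_left _ _ (inv_ne_zero hc.ne'), mul_assoc]

lemma mutualInfo_scale (hc : 0 < c) : mutualInfo ν (c * t) (c ^ 2 * v) = mutualInfo ν t v := by
  simp only [mutualInfo, klDensity_scale hc, integral_const_mul,
    Measure.integral_comp_div (klDensity ν t v _), abs_of_pos hc, smul_eq_mul,
    inv_mul_cancel_left₀ hc.ne']

section dataProcessing

variable {a b : ℝ} (hν : IsProbFinsuppR ν) (ha : 0 < a) (hb : 0 < b)
include hν ha hb

/- Both factors in `klDensity ν t (a + b) q x` are integrals against `gaussPDF a` of their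
variance-`b` versions, so the log-sum inequality applies. -/
lemma klDensity_add_le_integral {q : ℝ} (hq : q ∈ ν.support) (x : ℝ) :
    klDensity ν t (a + b) q x ≤ ∫ y, gaussPDF a y * klDensity ν t b q (x - y) := by
  have habs_mix : ∀ z, |mixPDF ν t b z| ≤ (√(2 * π * b))⁻¹ := fun z => by
    rw [abs_of_pos (mixPDF_pos hν hb z)]
    exact mixPDF_le hν hb z
  have hratio : ∀ y, gaussPDF a y * gaussPDF b (x - t * q - y)
      * logb 2 (gaussPDF a y * gaussPDF b (x - t * q - y) / (gaussPDF a y * mixPDF ν t b (x - y)))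
      = gaussPDF a y * klDensity ν t b q (x - y) := fun y => by
    rw [mul_div_mul_left _ _ (gaussPDF_pos ha y).ne', klDensity, sub_right_comm, mul_assoc]
  have h := mul_logb_div_le_integral_mul_logb_div
    (f := fun y => gaussPDF a y * gaussPDF b (x - t * q - y))
    (g := fun y => gaussPDF a y * mixPDF ν t b (x - y))
    (fun y => mul_pos (gaussPDF_pos ha y) (gaussPDF_pos hb _))
    (fun y => mul_pos (gaussPDF_pos ha y) (mixPDF_pos hν hb _))
    (integrable_gaussPDF_mul_comp_sub ha continuous_gaussPDF (abs_gaussPDF_le hb) _)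
    (integrable_gaussPDF_mul_comp_sub ha continuous_mixPDF habs_mix _)
    (by rw [integral_gaussPDF_mul_gaussPDF_sub ha hb]; exact gaussPDF_pos (by positivity) _)
    (by rw [integral_gaussPDF_mul_mixPDF_sub ha hb]; exact mixPDF_pos hν (by positivity) _)
    (by simp_rw [hratio]
        exact integrable_gaussPDF_mul_comp_sub ha (continuous_klDensity hν hb q)
          (abs_klDensity_le hν hb hq) x)
  simp_rw [hratio, integral_gaussPDF_mul_gaussPDF_sub ha hb,
    integral_gaussPDF_mul_mixPDF_sub ha hb] at h
  exact h

lemma integral_klDensity_add_le {q : ℝ} (hq : q ∈ ν.support) :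
    ∫ x, klDensity ν t (a + b) q x ≤ ∫ x, klDensity ν t b q x := by
  have hK := integrable_klDensity hν hb (t := t) hq
  calc ∫ x, klDensity ν t (a + b) q x
      ≤ ∫ x, (gaussPDF a ⋆[ContinuousLinearMap.mul ℝ ℝ] klDensity ν t b q) x :=
        integral_mono (integrable_klDensity hν (by positivity) hq)
          ((integrable_gaussPDF ha).integrable_convolution _ hK)
          (klDensity_add_le_integral hν ha hb hq)
    _ = ∫ x, klDensity ν t b q x := by
        rw [integral_convolution _ (integrable_gaussPDF ha) hK, integral_gaussPDF ha,
          ContinuousLinearMap.mul_apply', one_mul]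

lemma mutualInfo_add_le : mutualInfo ν t (a + b) ≤ mutualInfo ν t b :=
  Finset.sum_le_sum fun q hq =>
    mul_le_mul_of_nonneg_left (integral_klDensity_add_le hν ha hb hq) (hν.1 q)

end dataProcessing

lemma mutualInfo_le_of_le_var {w : ℝ} (hν : IsProbFinsuppR ν) (hv : 0 < v) (hvw : v ≤ w) :
    mutualInfo ν t w ≤ mutualInfo ν t v := by
  rcases hvw.eq_or_lt with rfl | hlt
  · rfl
  simpa using mutualInfo_add_le hν (sub_pos.2 hlt) hv (t := t)

lemma mutualInfo_le_of_le {s : ℝ} (hν : IsProbFinsuppR ν) (hs : 0 < s) (hst : s ≤ t) :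
    mutualInfo ν s 1 ≤ mutualInfo ν t 1 := by
  have ht : 0 < t := hs.trans_le hst
  set c := s / t
  have hc : 0 < c := div_pos hs ht
  have hc1 : c ≤ 1 := (div_le_one ht).2 hst
  calc mutualInfo ν s 1 ≤ mutualInfo ν s (c ^ 2 * 1) :=
        mutualInfo_le_of_le_var hν (by positivity) (by nlinarith)
    _ = mutualInfo ν (c * t) (c ^ 2 * 1) := by rw [div_mul_cancel₀ s ht.ne']
    _ = mutualInfo ν t 1 := mutualInfo_scale hc

lemma gaussianReal_eq_withDensity_gaussPDF (m : ℝ) :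
    gaussianReal m 1 = volume.withDensity (fun x => ENNReal.ofReal (gaussPDF 1 (x - m))) := by
  rw [gaussianReal_of_var_ne_zero _ one_ne_zero]
  rfl

lemma mconv_discLaw_gaussianReal (hν : ∀ q, 0 ≤ ν q) (t : ℝ) :
    mconv (discLaw ν t) (gaussianReal 0 1)
      = volume.withDensity (fun x => ENNReal.ofReal (mixPDF ν t 1 x)) := by
  change (∑ q ∈ ν.support, ENNReal.ofReal (ν q) • Measure.dirac (t * q)) ∗ gaussianReal 0 1
    = _
  simp_rw [Measure.finset_sum_conv, Measure.conv_smul_left, Measure.dirac_conv,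
    gaussianReal_map_const_add, zero_add, gaussianReal_eq_withDensity_gaussPDF]
  have hmeas : ∀ q, Measurable fun x => ENNReal.ofReal (gaussPDF 1 (x - t * q)) := fun q =>
    (continuous_gaussPDF.comp (continuous_sub_right _)).measurable.ennreal_ofReal
  rw [Finset.sum_congr rfl fun q _ => (withDensity_smul _ (hmeas q)).symm,
    ← withDensity_finset_sum _ _ fun q => (hmeas q).const_smul _]
  congr 1
  funext x
  rw [mixPDF, ENNReal.ofReal_sum_of_nonneg fun q _ => mul_nonneg (hν q) (gaussPDF_pos one_pos _).le]
  simp_rw [ENNReal.ofReal_mul (hν _), Pi.smul_apply, smul_eq_mul]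

lemma smoothEnt_eq_entropy (hν : IsProbFinsuppR ν) (t : ℝ) :
    smoothEnt ν t = entropy (mixPDF ν t 1) := by
  have hmeas : Measurable fun x => ENNReal.ofReal (mixPDF ν t 1 x) :=
    continuous_mixPDF.measurable.ennreal_ofReal
  rw [smoothEnt, diffEnt, mconv_discLaw_gaussianReal hν.1, entropy]
  congr 1
  refine integral_congr_ae ?_
  filter_upwards [Measure.rnDeriv_withDensity volume hmeas] with x hx
  rw [hx, ENNReal.toReal_ofReal (mixPDF_pos hν one_pos x).le]

lemma smoothEnt_eq (hν : IsProbFinsuppR ν) (t : ℝ) :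
    smoothEnt ν t = entropy (gaussPDF 1) + mutualInfo ν t 1 := by
  rw [smoothEnt_eq_entropy hν, entropy_mixPDF hν one_pos]

lemma smoothEnt_le_of_le {s : ℝ} (hν : IsProbFinsuppR ν) (hs : 0 < s) (hst : s ≤ t) :
    smoothEnt ν s ≤ smoothEnt ν t := by
  rw [smoothEnt_eq hν, smoothEnt_eq hν]
  exact add_le_add_right (mutualInfo_le_of_le hν hs hst) _

lemma smoothEnt_sub_le_shannonEntropy (hν : IsProbFinsuppR ν) (s t : ℝ) :
    smoothEnt ν s - smoothEnt ν t ≤ shannonEntropy ν := by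
  rw [smoothEnt_eq hν, smoothEnt_eq hν]
  linarith [mutualInfo_le_shannonEntropy hν one_pos (t := s),
    mutualInfo_nonneg hν one_pos (t := t)]

end GaussianMixture

open GaussianMixture

section Phi

variable {ν : ℝ →₀ ℝ} {a : ℝ}

lemma bddAbove_smoothEnt_sub (hν : IsProbFinsuppR ν) (a : ℝ) :
    BddAbove {r : ℝ | ∃ t : ℝ, 0 < t ∧ r = smoothEnt ν (t * a) - smoothEnt ν t} :=
  ⟨shannonEntropy ν, by
    rintro r ⟨t, -, rfl⟩
    exact smoothEnt_sub_le_shannonEntropy hν _ _⟩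

lemma smoothEnt_sub_le_Phi (hν : IsProbFinsuppR ν) {t : ℝ} (ht : 0 < t) (a : ℝ) :
    smoothEnt ν (t * a) - smoothEnt ν t ≤ Phi ν a :=
  le_csSup (bddAbove_smoothEnt_sub hν a) ⟨t, ht, rfl⟩

lemma Phi_le_of_forall_le {r : ℝ} (h : ∀ t, 0 < t → smoothEnt ν (t * a) - smoothEnt ν t ≤ r) :
    Phi ν a ≤ r :=
  csSup_le ⟨_, 1, one_pos, rfl⟩ (by
    rintro _ ⟨t, ht, rfl⟩
    exact h t ht)

lemma Phi_le_Phi {b : ℝ} (hν : IsProbFinsuppR ν) (ha : 0 < a) (hab : a ≤ b) :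
    Phi ν a ≤ Phi ν b :=
  Phi_le_of_forall_le fun t ht => by
    linarith [smoothEnt_le_of_le hν (mul_pos ht ha) (mul_le_mul_of_nonneg_left hab ht.le),
      smoothEnt_sub_le_Phi hν ht b]

lemma Phi_sq_le (hν : IsProbFinsuppR ν) (ha : 0 < a) : Phi ν (a ^ 2) ≤ 2 * Phi ν a :=
  Phi_le_of_forall_le fun t ht => by
    have h := smoothEnt_sub_le_Phi hν (mul_pos ht ha) a
    rw [mul_assoc, ← sq] at h
    linarith [smoothEnt_sub_le_Phi hν ht a]

end Phi

/-- `Φ_ν` is monotone increasing on `(0,∞)` and `Φ_ν(a²)/log₂(a²) ≤ Φ_ν(a)/log₂ a`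
(equivalently `Φ_ν(a²) ≤ 2Φ_ν(a)`) for every `a > 1`. -/
theorem stmt12 (ν : ℝ →₀ ℝ) (hν : IsProbFinsuppR ν) :
    (∀ a b : ℝ, 0 < a → a ≤ b → Phi ν a ≤ Phi ν b) ∧
    (∀ a : ℝ, 1 < a →
      Phi ν (a ^ 2) / Real.logb 2 (a ^ 2) ≤ Phi ν a / Real.logb 2 a ∧
      Phi ν (a ^ 2) ≤ 2 * Phi ν a) := by
  refine ⟨fun a b ha hab => Phi_le_Phi hν ha hab, fun a ha => ?_⟩
  have hsq := Phi_sq_le hν (zero_lt_one.trans ha)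
  have hlog : 0 < logb 2 a := logb_pos one_lt_two ha
  refine ⟨?_, hsq⟩
  rw [logb_pow, Nat.cast_ofNat, div_le_div_iff₀ (by positivity) hlog]
  nlinarith
end

section
/- Let S be a finite subset of Aff(ℂ) containing the identity, and suppose the group ⟨S⟩ generated by S is not virtually nilpotent. Then there exist g, γ ∈ S³ (products of three elements of S), an element λ ∈ ℂ^× that is not a root of unity, and h ∈ Aff(ℂ), such that h g h^{−1} = g_{λ,1} and h γ h^{−1} = g_{λ,−1}. -/
open scoped Pointwise

/-- A group is virtually nilpotent if it has a nilpotent subgroup of finite index. -/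
def IsVirtuallyNilpotent (G : Type*) [Group G] : Prop :=
  ∃ H : Subgroup G, Group.IsNilpotent H ∧ H.FiniteIndex

/-!
Write `χ : Aff(K) → Kˣ` for the multiplier homomorphism, `x ↦ a x + b ↦ a`. Two affine maps
commute iff `(χ a - 1) b(0) = (χ b - 1) a(0)`; in particular translations commute, and so do any
two elements of the centralizer of an `s` with `χ s ≠ 1`.

If every `χ s`, `s ∈ S`, is a root of unity, then `χ(⟨S⟩)` is a finitely generated torsion
abelian group, hence finite, and its kernel consists of translations: `⟨S⟩` is virtually
abelian. So some `s ∈ S` has `χ s = λ` not a root of unity, and, the centralizer of `s` being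
abelian, some `t ∈ S` does not commute with `s`. With `μ = χ t`, one of `λ²μ`, `μ²λ` is not a
root of unity, as `λ³ = (λ²μ)² (μ²λ)⁻¹`; say `λ²μ`. Then `g = s s t` and `γ = s t s` are
distinct with the same multiplier `λ²μ ≠ 1`, and conjugating by the affine `h` with
`h(g 0) - h(γ 0) = 2` that moves the fixed point of `g` to `1 / (1 - λ²μ)` puts them in the
form `x ↦ λ²μ x ± 1`.
-/

theorem isVirtuallyNilpotent_of_isMulCommutative {G : Type*} [Group G] (H : Subgroup G)
    [IsMulCommutative H] [H.FiniteIndex] : IsVirtuallyNilpotent G := by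
  open IsMulCommutative in exact ⟨H, inferInstance, inferInstance⟩

theorem Subgroup.finite_closure_of_isOfFinOrder {G : Type*} [CommGroup G] {s : Set G}
    (hs : s.Finite) (h : ∀ g ∈ s, IsOfFinOrder g) : Finite (closure s) := by
  have : Finite s := hs
  refine CommGroup.finite_of_fg_isMulTorsion _ fun g => ?_
  have hg : (g : G) ∈ CommGroup.torsion G := (closure_le (CommGroup.torsion G)).2 h g.2
  exact Submonoid.isOfFinOrder_coe.1 hg

theorem not_isOfFinOrder_mul_mul_or {G : Type*} [CommGroup G] {a : G} (b : G)
    (ha : ¬ IsOfFinOrder a) : ¬ IsOfFinOrder (a * a * b) ∨ ¬ IsOfFinOrder (b * b * a) := by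
  by_contra! h
  have h3 : a ^ 3 = (a * a * b) ^ 2 * (b * b * a)⁻¹ := by
    rw [eq_mul_inv_iff_mul_eq]
    simp only [pow_succ, pow_zero, one_mul]
    ac_rfl
  exact ha <| (isOfFinOrder_pow.1 (h3 ▸ (h.1.pow.mul h.2.inv))).resolve_right (by norm_num)

namespace AffineEquiv

variable {K : Type*} [Field K]

theorem linear_apply_eq_mul (e : K ≃ᵃ[K] K) (x : K) : e.linear x = x * e.linear 1 := by
  simpa using e.linear.map_smul x 1

def multiplier : (K ≃ᵃ[K] K) →* Kˣ where
  toFun e := Units.mk0 (e.linear 1) (e.linear.map_ne_zero_iff.2 one_ne_zero)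
  map_one' := Units.ext rfl
  map_mul' e f := Units.ext <| by
    change e.linear (f.linear 1) = e.linear 1 * f.linear 1
    rw [linear_apply_eq_mul, mul_comm]

theorem apply_eq_multiplier_mul_add (e : K ≃ᵃ[K] K) (x : K) :
    e x = multiplier e * x + e 0 := by
  have h := e.map_vadd 0 x
  rw [vadd_eq_add, add_zero] at h
  rw [h, vadd_eq_add, linear_apply_eq_mul, mul_comm]
  rfl

theorem ext_multiplier {e f : K ≃ᵃ[K] K} (h : multiplier e = multiplier f) (h0 : e 0 = f 0) :
    e = f :=
  ext fun x => by rw [apply_eq_multiplier_mul_add e, apply_eq_multiplier_mul_add f, h, h0]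

theorem commute_iff_multiplier (a b : K ≃ᵃ[K] K) :
    Commute a b ↔ ((multiplier a : K) - 1) * b 0 = ((multiplier b : K) - 1) * a 0 := by
  have hab (a b : K ≃ᵃ[K] K) : (a * b) 0 = multiplier a * b 0 + a 0 :=
    apply_eq_multiplier_mul_add a (b 0)
  constructor
  · intro h
    have := congrArg (· 0) h.eq
    simp only [hab] at this
    linear_combination this
  · intro h
    refine ext_multiplier (by rw [map_mul, map_mul, mul_comm]) ?_
    rw [hab, hab]
    linear_combination h

theorem commute_of_multiplier_eq_one {a b : K ≃ᵃ[K] K} (ha : multiplier a = 1)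
    (hb : multiplier b = 1) : Commute a b := by
  simp [commute_iff_multiplier, ha, hb]

theorem commute_of_commute_of_multiplier_ne_one {s a b : K ≃ᵃ[K] K} (hs : multiplier s ≠ 1)
    (ha : Commute s a) (hb : Commute s b) : Commute a b := by
  rw [commute_iff_multiplier] at *
  have hs' : (multiplier s : K) - 1 ≠ 0 := sub_ne_zero.2 (Units.val_eq_one.not.2 hs)
  refine mul_left_cancel₀ hs' ?_
  linear_combination ((multiplier a : K) - 1) * hb - ((multiplier b : K) - 1) * ha

theorem mul_mul_inv_apply_apply {k P V : Type*} [Ring k] [AddCommGroup V] [Module k V]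
    [AddTorsor V P] (h g : P ≃ᵃ[k] P) (y : P) : (h * g * h⁻¹) (h y) = h (g y) := by
  simp [inv_def]

def mulAdd (a : Kˣ) (b : K) : K ≃ᵃ[K] K :=
  (LinearEquiv.smulOfUnit a).toAffineEquiv.trans (constVAdd K K b)

@[simp]
theorem mulAdd_apply (a : Kˣ) (b x : K) : mulAdd a b x = a * x + b := by
  simp [mulAdd, LinearEquiv.smulOfUnit, Units.smul_def, add_comm]

theorem exists_conj_eq_mulAdd [NeZero (2 : K)] {g γ : K ≃ᵃ[K] K} (hne : g ≠ γ)
    (hm : multiplier g = multiplier γ) (h1 : multiplier g ≠ 1) :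
    ∃ h : K ≃ᵃ[K] K, (∀ x, (h * g * h⁻¹) x = (multiplier g : K) * x + 1) ∧
      (∀ x, (h * γ * h⁻¹) x = (multiplier g : K) * x - 1) := by
  set l : K := (multiplier g : K)
  have hbc : g 0 - γ 0 ≠ 0 := sub_ne_zero.2 fun h => hne (ext_multiplier hm h)
  have hl : 1 - l ≠ 0 := sub_ne_zero.2 fun h => h1 (Units.ext h.symm)
  set p : Kˣ := Units.mk0 (2 / (g 0 - γ 0)) (div_ne_zero two_ne_zero hbc)
  set q := (1 - p * g 0) / (1 - l)
  have hp : (p : K) * (g 0 - γ 0) = 2 := div_mul_cancel₀ _ hbc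
  have hq : q * (1 - l) = 1 - p * g 0 := div_mul_cancel₀ _ hl
  refine ⟨mulAdd p q, fun x => ?_, fun x => ?_⟩ <;> obtain ⟨y, rfl⟩ := (mulAdd p q).surjective x
  · rw [mul_mul_inv_apply_apply, mulAdd_apply, mulAdd_apply, apply_eq_multiplier_mul_add g]
    linear_combination hq
  · rw [mul_mul_inv_apply_apply, mulAdd_apply, mulAdd_apply, apply_eq_multiplier_mul_add γ, ← hm]
    linear_combination hq - hp

theorem isVirtuallyNilpotent_closure_of_isOfFinOrder {S : Set (K ≃ᵃ[K] K)} (hS : S.Finite)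
    (h : ∀ s ∈ S, IsOfFinOrder (multiplier s)) :
    IsVirtuallyNilpotent (Subgroup.closure S) := by
  set χ := multiplier.comp (Subgroup.closure S).subtype
  have : Finite χ.range := by
    rw [MonoidHom.range_comp, Subgroup.range_subtype, MonoidHom.map_closure]
    exact Subgroup.finite_closure_of_isOfFinOrder (hS.image _) <| by
      rintro _ ⟨s, hs, rfl⟩
      exact h s hs
  have : IsMulCommutative χ.ker := .of_comm fun a b =>
    Subtype.ext <| Subtype.ext <| (commute_of_multiplier_eq_one a.2 b.2).eq
  exact isVirtuallyNilpotent_of_isMulCommutative χ.ker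

theorem isVirtuallyNilpotent_closure_of_commute {S : Set (K ≃ᵃ[K] K)} {s : K ≃ᵃ[K] K}
    (hs : multiplier s ≠ 1) (h : ∀ t ∈ S, Commute s t) :
    IsVirtuallyNilpotent (Subgroup.closure S) := by
  have hS : Subgroup.closure S ≤ Subgroup.centralizer {s} :=
    (Subgroup.closure_le _).2 fun t ht => Subgroup.mem_centralizer_singleton_iff.2 (h t ht).eq.symm
  have hS' (a : Subgroup.closure S) : Commute s a :=
    (Subgroup.mem_centralizer_singleton_iff.1 (hS a.2)).symm
  have : IsMulCommutative (Subgroup.closure S) := .of_comm fun a b =>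
    Subtype.ext (commute_of_commute_of_multiplier_ne_one hs (hS' a) (hS' b)).eq
  exact isVirtuallyNilpotent_of_isMulCommutative ⊤

end AffineEquiv

open AffineEquiv in
theorem stmt16_general (S : Finset (ℂ ≃ᵃ[ℂ] ℂ))
    (hnn : ¬ IsVirtuallyNilpotent (Subgroup.closure (S : Set (ℂ ≃ᵃ[ℂ] ℂ)))) :
    ∃ g ∈ (S : Set (ℂ ≃ᵃ[ℂ] ℂ)) * (S : Set (ℂ ≃ᵃ[ℂ] ℂ)) * (S : Set (ℂ ≃ᵃ[ℂ] ℂ)),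
    ∃ γ ∈ (S : Set (ℂ ≃ᵃ[ℂ] ℂ)) * (S : Set (ℂ ≃ᵃ[ℂ] ℂ)) * (S : Set (ℂ ≃ᵃ[ℂ] ℂ)),
    ∃ lam : ℂ, lam ≠ 0 ∧ (¬ ∃ k : ℕ, 0 < k ∧ lam ^ k = 1) ∧
    ∃ h : ℂ ≃ᵃ[ℂ] ℂ,
      (∀ x : ℂ, (h * g * h⁻¹) x = lam * x + 1) ∧
      (∀ x : ℂ, (h * γ * h⁻¹) x = lam * x - 1) := by
  obtain ⟨s, hsS, hs⟩ : ∃ s ∈ S, ¬ IsOfFinOrder (multiplier s) := by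
    by_contra! h
    exact hnn (isVirtuallyNilpotent_closure_of_isOfFinOrder S.finite_toSet h)
  obtain ⟨t, htS, hst⟩ : ∃ t ∈ S, ¬ Commute s t := by
    by_contra! h
    exact hnn (isVirtuallyNilpotent_closure_of_commute (fun h1 => hs (h1 ▸ IsOfFinOrder.one)) h)
  obtain ⟨a, ha, b, hb, hab, hfin⟩ : ∃ a ∈ S, ∃ b ∈ S, ¬ Commute a b ∧
      ¬ IsOfFinOrder (multiplier (a * a * b)) := by
    rcases not_isOfFinOrder_mul_mul_or (multiplier t) hs with h | h
    · exact ⟨s, hsS, t, htS, hst, by rwa [map_mul, map_mul]⟩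
    · exact ⟨t, htS, s, hsS, fun h' => hst h'.symm, by rwa [map_mul, map_mul]⟩
  have hne : a * a * b ≠ a * b * a := by
    rw [mul_assoc, mul_assoc, Ne, mul_right_inj]
    exact hab
  obtain ⟨h, hg, hγ⟩ := exists_conj_eq_mulAdd hne (by simp only [map_mul, mul_right_comm])
    (fun h1 => hfin (h1 ▸ IsOfFinOrder.one))
  refine ⟨a * a * b, Set.mul_mem_mul (Set.mul_mem_mul ha ha) hb,
    a * b * a, Set.mul_mem_mul (Set.mul_mem_mul ha hb) ha, _, Units.ne_zero _, ?_, h, hg, hγ⟩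
  rwa [← isOfFinOrder_iff_pow_eq_one, Units.isOfFinOrder_val]

/-- If `S ⊆ Aff(ℂ)` is finite, contains the identity, and generates a non-virtually-nilpotent
group, then there are `g, γ ∈ S³`, some `λ ∈ ℂ^×` not a root of unity, and `h ∈ Aff(ℂ)` such
that `h g h⁻¹ = g_{λ,1} : x ↦ λx + 1` and `h γ h⁻¹ = g_{λ,−1} : x ↦ λx − 1`. Here `Aff(ℂ)`
is realized as the group of affine automorphisms of the complex line. -/
theorem stmt16 (S : Finset (ℂ ≃ᵃ[ℂ] ℂ)) (hone : (1 : ℂ ≃ᵃ[ℂ] ℂ) ∈ S)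
    (hnn : ¬ IsVirtuallyNilpotent (Subgroup.closure (S : Set (ℂ ≃ᵃ[ℂ] ℂ)))) :
    ∃ g ∈ (S : Set (ℂ ≃ᵃ[ℂ] ℂ)) * (S : Set (ℂ ≃ᵃ[ℂ] ℂ)) * (S : Set (ℂ ≃ᵃ[ℂ] ℂ)),
    ∃ γ ∈ (S : Set (ℂ ≃ᵃ[ℂ] ℂ)) * (S : Set (ℂ ≃ᵃ[ℂ] ℂ)) * (S : Set (ℂ ≃ᵃ[ℂ] ℂ)),
    ∃ lam : ℂ, lam ≠ 0 ∧ (¬ ∃ k : ℕ, 0 < k ∧ lam ^ k = 1) ∧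
    ∃ h : ℂ ≃ᵃ[ℂ] ℂ,
      (∀ x : ℂ, (h * g * h⁻¹) x = lam * x + 1) ∧
      (∀ x : ℂ, (h * γ * h⁻¹) x = lam * x - 1) :=
  stmt16_general S hnn
end
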